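/- arXiv:1211.3949 — 2 statements merged into one kernel-verified Lean document; each statement's English description precedes it below -/
import Mathlib

section
/- Let b ≥ 2, k ≥ 1, l_k = b^k - 1, let (s^k_i)_{i=0}^{l_k} enumerate b^k in increasing lexicographic order, and let h ∈ C↑_sur(b^ω). Then the strictly increasing l_k-tuples from Y_h are exactly the tuples (max (f∘h)⁻¹(W_{s^k_i}))_{i < l_k} as f ranges over C↑_sur(b^ω). -/
noncomputable section
open Classical

/-- Lexicographic strict order on `ℕ → Fin b`. -/
def lexLT (b : ℕ) (x y : ℕ → Fin b) : Prop :=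
  ∃ n, (∀ m, m < n → x m = y m) ∧ x n < y n

/-- Lexicographic order `≤_lex` on `ℕ → Fin b`. -/
def lexLE (b : ℕ) (x y : ℕ → Fin b) : Prop := x = y ∨ lexLT b x y

def IsGreatestLex (b : ℕ) (S : Set (ℕ → Fin b)) (x : ℕ → Fin b) : Prop :=
  x ∈ S ∧ ∀ y ∈ S, lexLE b y x

def IsLeastLex (b : ℕ) (S : Set (ℕ → Fin b)) (x : ℕ → Fin b) : Prop :=
  x ∈ S ∧ ∀ y ∈ S, lexLE b x y

/-- `S` is an interval for the lexicographic order. -/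
def LexInterval (b : ℕ) (S : Set (ℕ → Fin b)) : Prop :=
  ∀ x ∈ S, ∀ y ∈ S, ∀ z, lexLE b x z → lexLE b z y → z ∈ S

/-- The basic clopen set of sequences extending the finite sequence `s`. -/
def W (b : ℕ) (s : List (Fin b)) : Set (ℕ → Fin b) :=
  {x | ∀ i, (hi : i < s.length) → x i = s.get ⟨i, hi⟩}

/-- Continuous nondecreasing surjections of `b^ω`, i.e. members of `C↑_sur(b^ω)`. -/
def CSur (b : ℕ) (f : (ℕ → Fin b) → (ℕ → Fin b)) : Prop :=
  Continuous f ∧ Function.Surjective f ∧ ∀ x y, lexLE b x y → lexLE b (f x) (f y)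

/-- A filtering on `b^ω`. -/
def Filtering (b : ℕ) (U : List (Fin b) → Set (ℕ → Fin b)) : Prop :=
  (∀ s, (U s).Nonempty ∧ IsClopen (U s) ∧ LexInterval b (U s)) ∧
  U [] = Set.univ ∧
  (∀ s, U s = ⋃ i : Fin b, U (s ++ [i])) ∧
  (∀ s, ∀ i j : Fin b, i ≠ j → Disjoint (U (s ++ [i])) (U (s ++ [j]))) ∧
  (∀ s, ∀ i j : Fin b, i < j → ∀ x y,
    IsGreatestLex b (U (s ++ [i])) x → IsGreatestLex b (U (s ++ [j])) y → lexLT b x y)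

/-- `A_b`: sequences eventually equal to `b-1` (the top of `Fin b`), except the constant
top sequence (the lexicographic maximum of `b^ω`). -/
def AbSet (b : ℕ) : Set (ℕ → Fin b) :=
  {x | (∃ N, ∀ n, N ≤ n → ∀ j : Fin b, j ≤ x n) ∧ ¬ ∀ n, ∀ j : Fin b, j ≤ x n}

/-- `Y` is order isomorphic to `ℚ` with respect to the lexicographic order. -/
def OrderIsoQ (b : ℕ) (Y : Set (ℕ → Fin b)) : Prop :=
  ∃ e : ℚ ≃ Y, ∀ p q : ℚ, p ≤ q ↔ lexLE b (e p).1 (e q).1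

/-- `Y_f = {max f⁻¹(W_s) : s ∈ b^{<ω}} \ {max b^ω}`. -/
def Yset (b : ℕ) (f : (ℕ → Fin b) → (ℕ → Fin b)) : Set (ℕ → Fin b) :=
  {x | (∃ s : List (Fin b), IsGreatestLex b (f ⁻¹' W b s) x) ∧ ¬ ∀ n, ∀ j : Fin b, j ≤ x n}

/-- The metric `ρ_b` on `b^ω`. -/
def rhoB (b : ℕ) (x y : ℕ → Fin b) : ℝ :=
  if h : x = y then 0 else (2 : ℝ) ^ (-(Nat.find (Function.ne_iff.mp h) : ℤ))

/-- The sup-metric `ρ_∞` on `C↑_sur(b^ω)`. -/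
def rhoInf (b : ℕ) (f g : (ℕ → Fin b) → (ℕ → Fin b)) : ℝ :=
  ⨆ x, rhoB b (f x) (g x)

/-- `⌊log₂(1/ε)⌋ + 1`. -/
def kOf (ε : ℝ) : ℕ := ⌊Real.logb 2 (1 / ε)⌋₊ + 1

/-- The `l`-th odd tangent number `t_l = tan^{(2l-1)}(0)`. -/
def oddTangent (l : ℕ) : ℝ := iteratedDeriv (2 * l - 1) Real.tan 0

/-- The lexicographically increasing enumeration of `b^k`: `sEnum b k hb i` is the
`i`-th element of `b^k` in lexicographic order (base-`b` digits, most significant first). -/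
def sEnum (b k : ℕ) (hb : 0 < b) (i : ℕ) : List (Fin b) :=
  List.ofFn fun j : Fin k => (⟨i / b ^ (k - 1 - (j : ℕ)) % b, Nat.mod_lt _ hb⟩ : Fin b)

end

/-!
Both inclusions come down to cutting `b^ω`, ordered lexicographically, at finitely many points.
If `x = max h⁻¹(W_t)` then `h x = max W_t` ends in `b - 1`'s, so the sets `{z ≤ h x}` are clopen
and the `b^k - 1` points `h (v i)` cut `b^ω` into `b^k` consecutive nonempty clopen
intervals. On the `i`-th interval let `f` be a continuous monotone surjection onto `W_{s_i}`:
clamp to a cylinder inside the interval, shift that cylinder onto `b^ω`, and prefix `s_i`. Then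
`(f ∘ h)⁻¹(W_{s_i}) = h⁻¹(i-th interval)`, whose maximum is `v i`. Conversely, continuity of `f`
at `h (v i)` gives a cylinder `W_t ∋ h (v i)` with `f(W_t) ⊆ W_{s_i}`, so `v i = max h⁻¹(W_t)`.
-/

open PiNat Filter Topology

theorem max_min_eq_or_le_of_le {β : Type*} [LinearOrder β] {a c x y : β} (hxy : x ≤ y) :
    max a (min x c) = max a (min y c) ∨ x ≤ max a (min x c) ∧ max a (min y c) ≤ y := by
  grind

theorem forall_le_apply_iff_eq_top {α : Type*} [PartialOrder α] [OrderTop α] {x : ℕ → α} :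
    (∀ n, ∀ j : α, j ≤ x n) ↔ x = ⊤ :=
  ⟨fun H => funext fun n => top_le_iff.1 (H n ⊤), fun H n j => by rw [H]; exact le_top⟩

namespace PiNat

variable {α : Type*} {x y z : ℕ → α} {n : ℕ}

def splice (x : ℕ → α) (n : ℕ) (y : ℕ → α) : ℕ → α := fun m => if m < n then x m else y (m - n)

theorem splice_mem_cylinder (x : ℕ → α) (n : ℕ) (y : ℕ → α) : splice x n y ∈ cylinder x n :=
  fun _ hm => if_pos hm

@[simp] theorem splice_add (x : ℕ → α) (n : ℕ) (y : ℕ → α) (m : ℕ) :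
    splice x n y (m + n) = y m := by
  simp [splice]

theorem splice_shift (h : y ∈ cylinder x n) : splice x n (fun m => y (m + n)) = y := by
  funext m
  by_cases hm : m < n
  · simp [splice, hm, h m hm]
  · simp [splice, hm, Nat.sub_add_cancel (not_lt.1 hm)]

section LinearOrder

variable [LinearOrder α]

theorem mem_cylinder_of_toLex_le_of_le (hy : y ∈ cylinder x n) (hxz : toLex x ≤ toLex z)
    (hzy : toLex z ≤ toLex y) : z ∈ cylinder x n := by
  intro i
  induction i using Nat.strong_induction_on with
  | _ i ih =>
    intro hi
    have hzx : ∀ j < i, z j = x j := fun j hj => ih j hj (hj.trans hi)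
    refine le_antisymm ?_ (Pi.apply_le_of_toLex hxz fun j hj => (hzx j hj).symm)
    rw [← hy i hi]
    exact Pi.apply_le_of_toLex hzy fun j hj => (hzx j hj).trans (hy j (hj.trans hi)).symm

theorem exists_cylinder_toLex_lt (h : toLex x < toLex y) :
    ∃ n, ∀ x' ∈ cylinder x n, ∀ y' ∈ cylinder y n, toLex x' < toLex y' := by
  obtain ⟨i, hi, hlt⟩ := h
  refine ⟨i + 1, fun x' hx' y' hy' => ⟨i, fun j hj => ?_, ?_⟩⟩
  · simpa [hx' j (by omega), hy' j (by omega)] using hi j hj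
  · simpa [hx' i (by omega), hy' i (by omega)] using hlt

theorem toLex_lt_iff_shift (h : y ∈ cylinder x n) :
    toLex x < toLex y ↔ toLex (fun m => x (m + n)) < toLex (fun m => y (m + n)) := by
  constructor
  · rintro ⟨i, hi, hlt⟩
    have hni : n ≤ i := by
      by_contra! hin
      exact hlt.ne (h i hin).symm
    refine ⟨i - n, fun j hj => hi (j + n) (by omega), ?_⟩
    simpa [Nat.sub_add_cancel hni] using hlt
  · rintro ⟨i, hi, hlt⟩
    refine ⟨i + n, fun j hj => ?_, hlt⟩
    rcases lt_or_ge j n with hjn | hjn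
    · exact (h j hjn).symm
    · simpa [Nat.sub_add_cancel hjn] using hi (j - n) (by omega)

theorem toLex_le_iff_shift (h : y ∈ cylinder x n) :
    toLex x ≤ toLex y ↔ toLex (fun m => x (m + n)) ≤ toLex (fun m => y (m + n)) := by
  rw [← not_lt, ← not_lt]
  exact not_congr (toLex_lt_iff_shift ((mem_cylinder_comm _ _ _).1 h))

theorem splice_le_splice {y y' : ℕ → α} (h : y ≤ y') : splice x n y ≤ splice x n y' := by
  intro m
  by_cases hm : m < n <;> simp [splice, hm, h _]

theorem toLex_splice_le_splice {y y' : ℕ → α} (h : toLex y ≤ toLex y') :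
    toLex (splice x n y) ≤ toLex (splice x n y') := by
  rw [toLex_le_iff_shift fun m hm => (splice_mem_cylinder x n y' m hm).trans
    (splice_mem_cylinder x n y m hm).symm]
  simpa using h

noncomputable def lexClamp (a c z : ℕ → α) : ℕ → α :=
  ofLex (max (toLex a) (min (toLex z) (toLex c)))

theorem le_lexClamp (a c z : ℕ → α) : toLex a ≤ toLex (lexClamp a c z) := le_max_left _ _

theorem lexClamp_le {a c : ℕ → α} (hac : toLex a ≤ toLex c) (z : ℕ → α) :
    toLex (lexClamp a c z) ≤ toLex c :=
  max_le hac (min_le_right _ _)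

theorem lexClamp_eq_self {a c : ℕ → α} (ha : toLex a ≤ toLex z) (hc : toLex z ≤ toLex c) :
    lexClamp a c z = z := by
  simp [lexClamp, min_eq_left hc, max_eq_right ha]

theorem lexClamp_mono {a c z' : ℕ → α} (h : toLex z ≤ toLex z') :
    toLex (lexClamp a c z) ≤ toLex (lexClamp a c z') :=
  max_le_max le_rfl (min_le_min_right _ h)

theorem lexClamp_mem_cylinder (a c : ℕ → α) (h : y ∈ cylinder x n) :
    lexClamp a c y ∈ cylinder (lexClamp a c x) n := by
  wlog hxy : toLex x ≤ toLex y generalizing x y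
  · exact (mem_cylinder_comm _ _ _).1 (this ((mem_cylinder_comm _ _ _).1 h) (le_of_not_ge hxy))
  rcases max_min_eq_or_le_of_le (a := toLex a) (c := toLex c) hxy with heq | ⟨hx, hy⟩
  · rw [show lexClamp a c y = lexClamp a c x from congrArg ofLex heq.symm]
    exact self_mem_cylinder _ _
  · have hxy' : toLex (lexClamp a c x) ≤ toLex (lexClamp a c y) := lexClamp_mono hxy
    have hcx : lexClamp a c x ∈ cylinder x n :=
      mem_cylinder_of_toLex_le_of_le h hx (hxy'.trans hy)
    have hcy : lexClamp a c y ∈ cylinder x n :=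
      mem_cylinder_of_toLex_le_of_le h (hx.trans hxy') hy
    exact fun i hi => (hcy i hi).trans (hcx i hi).symm

section BoundedOrder

variable [BoundedOrder α]

/-- A monotone continuous retraction onto `cylinder x n`, followed by the shift identifying that
cylinder with `ℕ → α`. -/
noncomputable def blowUp (x : ℕ → α) (n : ℕ) (z : ℕ → α) : ℕ → α :=
  fun m => lexClamp (splice x n ⊥) (splice x n ⊤) z (m + n)

theorem lexClamp_splice_mem_cylinder (x : ℕ → α) (n : ℕ) (z : ℕ → α) :
    lexClamp (splice x n ⊥) (splice x n ⊤) z ∈ cylinder x n := by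
  have hlo := splice_mem_cylinder x n ⊥
  refine fun i hi => (mem_cylinder_of_toLex_le_of_le ?_ (le_lexClamp _ _ z)
    (lexClamp_le (Pi.toLex_monotone (splice_le_splice bot_le)) z) i hi).trans (hlo i hi)
  exact fun i hi => (splice_mem_cylinder x n ⊤ i hi).trans (hlo i hi).symm

theorem blowUp_splice (x : ℕ → α) (n : ℕ) (y : ℕ → α) : blowUp x n (splice x n y) = y := by
  funext m
  rw [blowUp, lexClamp_eq_self (Pi.toLex_monotone (splice_le_splice bot_le))
    (Pi.toLex_monotone (splice_le_splice le_top)), splice_add]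

theorem blowUp_mono (x : ℕ → α) (n : ℕ) {z z' : ℕ → α} (h : toLex z ≤ toLex z') :
    toLex (blowUp x n z) ≤ toLex (blowUp x n z') := by
  have hz := lexClamp_splice_mem_cylinder x n z
  have hz' := lexClamp_splice_mem_cylinder x n z'
  exact (toLex_le_iff_shift fun i hi => (hz' i hi).trans (hz i hi).symm).1 (lexClamp_mono h)

end BoundedOrder

end LinearOrder

section Topology

variable [TopologicalSpace α]

theorem continuous_splice (x : ℕ → α) (n : ℕ) : Continuous (splice x n) :=
  continuous_pi fun m => by
    by_cases hm : m < n
    · simpa [splice, hm] using continuous_const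
    · simpa [splice, hm] using continuous_apply (m - n)

variable [DiscreteTopology α]

theorem cylinder_mem_nhds (x : ℕ → α) (n : ℕ) : cylinder x n ∈ 𝓝 x :=
  (isOpen_cylinder _ x n).mem_nhds (self_mem_cylinder x n)

theorem exists_cylinder_subset {U : Set (ℕ → α)} {x : ℕ → α} (hU : U ∈ 𝓝 x) :
    ∃ n, cylinder x n ⊆ U := by
  obtain ⟨_, ⟨y, n, rfl⟩, hx, hsub⟩ := (isTopologicalBasis_cylinders _).mem_nhds_iff.1 hU
  exact ⟨n, mem_cylinder_iff_eq.1 hx ▸ hsub⟩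

theorem continuous_of_forall_mem_cylinder {β : Type*} [TopologicalSpace β] [DiscreteTopology β]
    {f : (ℕ → α) → ℕ → β} (hf : ∀ x n, ∃ N, ∀ y ∈ cylinder x N, f y ∈ cylinder (f x) n) :
    Continuous f := by
  refine continuous_pi fun m => ((IsLocallyConstant.iff_eventually_eq _).2 fun x => ?_).continuous
  obtain ⟨N, hN⟩ := hf x (m + 1)
  filter_upwards [cylinder_mem_nhds x N] with y hy using hN y hy m (Nat.lt_succ_self m)

variable [LinearOrder α]

theorem continuous_lexClamp (a c : ℕ → α) : Continuous (lexClamp a c) :=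
  continuous_of_forall_mem_cylinder fun _ n => ⟨n, fun _ hy => lexClamp_mem_cylinder a c hy⟩

theorem continuous_blowUp [BoundedOrder α] (x : ℕ → α) (n : ℕ) : Continuous (blowUp x n) :=
  continuous_pi fun m => (continuous_apply (m + n)).comp (continuous_lexClamp _ _)

theorem isOpen_setOf_toLex_lt (w : ℕ → α) : IsOpen {z : ℕ → α | toLex w < toLex z} := by
  refine isOpen_iff_mem_nhds.2 fun z hz => ?_
  obtain ⟨n, hn⟩ := exists_cylinder_toLex_lt hz
  filter_upwards [cylinder_mem_nhds z n] with y hy using hn w (self_mem_cylinder w n) y hy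

theorem isOpen_setOf_toLex_le [OrderTop α] {w : ℕ → α} (hw : ∀ᶠ m in atTop, w m = ⊤) :
    IsOpen {z : ℕ → α | toLex z ≤ toLex w} := by
  refine isOpen_iff_mem_nhds.2 fun z hz => ?_
  rcases (show toLex z ≤ toLex w from hz).lt_or_eq with hlt | heq
  · obtain ⟨n, hn⟩ := exists_cylinder_toLex_lt hlt
    filter_upwards [cylinder_mem_nhds z n] with y hy using (hn y hy w (self_mem_cylinder w n)).le
  · obtain ⟨M, hM⟩ := eventually_atTop.1 hw
    filter_upwards [cylinder_mem_nhds z M] with y hy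
    refine Pi.toLex_monotone fun m => ?_
    rcases lt_or_ge m M with hm | hm
    · exact (hy m hm).trans (congrFun (toLex_inj.1 heq) m) |>.le
    · exact (hM m hm).symm ▸ le_top

end Topology

end PiNat

section Lex

variable {b : ℕ} {x y : ℕ → Fin b}

theorem lexLT_iff : lexLT b x y ↔ toLex x < toLex y := Iff.rfl

theorem lexLE_iff : lexLE b x y ↔ toLex x ≤ toLex y := by
  rw [lexLE, le_iff_eq_or_lt, toLex_inj]
  rfl

theorem isGreatestLex_iff {S : Set (ℕ → Fin b)} :
    IsGreatestLex b S x ↔ x ∈ S ∧ ∀ y ∈ S, toLex y ≤ toLex x := by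
  simp only [IsGreatestLex, lexLE_iff]

theorem CSur.toLex_le {f : (ℕ → Fin b) → ℕ → Fin b} (hf : CSur b f) (h : toLex x ≤ toLex y) :
    toLex (f x) ≤ toLex (f y) :=
  lexLE_iff.1 (hf.2.2 x y (lexLE_iff.2 h))

theorem W_eq_cylinder {s : List (Fin b)} (hx : x ∈ W b s) : W b s = cylinder x s.length := by
  ext y
  exact forall₂_congr fun i hi => by rw [hx i hi]

theorem W_nonempty (hb : 0 < b) (s : List (Fin b)) : (W b s).Nonempty :=
  ⟨fun m => s.getD m ⟨0, hb⟩, fun i hi => by simp [List.getElem?_eq_getElem hi]⟩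

theorem W_ofFn (x : ℕ → Fin b) (n : ℕ) : W b (List.ofFn fun j : Fin n => x j) = cylinder x n := by
  rw [W_eq_cylinder (x := x) fun i hi => by simp, List.length_ofFn]

theorem mem_W_append_singleton {s : List (Fin b)} {d : Fin b} :
    x ∈ W b (s ++ [d]) ↔ x ∈ W b s ∧ x s.length = d := by
  simp only [W, Set.mem_ofPred_eq, List.length_append, List.length_singleton]
  constructor
  · intro h
    refine ⟨fun i hi => by simpa [List.getElem_append_left hi] using h i (by omega), ?_⟩
    simpa using h s.length (by omega)
  · rintro ⟨h, hd⟩ i hi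
    rcases lt_or_eq_of_le (Nat.lt_succ_iff.1 hi) with hi | rfl
    · simpa [List.getElem_append_left hi] using h i hi
    · simpa using hd

theorem isOpen_W (s : List (Fin b)) : IsOpen (W b s) := by
  rcases (W b s).eq_empty_or_nonempty with h | ⟨x, hx⟩
  · rw [h]
    exact isOpen_empty
  · rw [W_eq_cylinder hx]
    exact isOpen_cylinder _ _ _

theorem CSur.comp {f g : (ℕ → Fin b) → ℕ → Fin b} (hf : CSur b f) (hg : CSur b g) :
    CSur b (f ∘ g) :=
  ⟨hf.1.comp hg.1, hf.2.1.comp hg.2.1, fun x y hxy => hf.2.2 _ _ (hg.2.2 x y hxy)⟩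

end Lex

section Digits

def prefixVal (b : ℕ) (x : ℕ → Fin b) : ℕ → ℕ
  | 0 => 0
  | k + 1 => b * prefixVal b x k + x k

theorem prefixVal_lt {b : ℕ} (x : ℕ → Fin b) (k : ℕ) : prefixVal b x k < b ^ k := by
  induction k with
  | zero => simp [prefixVal]
  | succ k ih =>
    have := (x k).isLt
    rw [prefixVal, pow_succ']
    nlinarith

theorem length_sEnum (b k : ℕ) (hb : 0 < b) (i : ℕ) : (sEnum b k hb i).length = k :=
  List.length_ofFn

theorem sEnum_succ (b k : ℕ) (hb : 0 < b) (i : ℕ) :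
    sEnum b (k + 1) hb i = sEnum b k hb (i / b) ++ [⟨i % b, Nat.mod_lt _ hb⟩] := by
  rw [sEnum, List.ofFn_succ', List.concat_eq_append, sEnum]
  congr 2
  · funext j
    have hj := j.isLt
    rw [Fin.ext_iff]
    simp only [Fin.val_castSucc, Nat.div_div_eq_div_mul, ← pow_succ']
    congr 3
    omega
  · simp

variable {b : ℕ} {x y : ℕ → Fin b}

theorem mem_W_sEnum_iff {k : ℕ} (hb : 0 < b) {i : ℕ} :
    x ∈ W b (sEnum b k hb i) ↔ prefixVal b x k = i % b ^ k := by
  induction k generalizing i with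
  | zero => simp [prefixVal, W, sEnum, Nat.mod_one]
  | succ k ih =>
    rw [sEnum_succ, mem_W_append_singleton, ih, length_sEnum, prefixVal, pow_succ', Nat.mod_mul,
      Fin.ext_iff]
    have hxk := (x k).isLt
    have hib := Nat.mod_lt i hb
    constructor
    · rintro ⟨h1, h2⟩
      rw [h1, h2]
      ring
    · intro h
      have h1 := congrArg (· / b) h
      have h2 := congrArg (· % b) h
      rw [Nat.mul_add_div hb, Nat.div_eq_of_lt hxk, add_comm (i % b), Nat.mul_add_div hb,
        Nat.div_eq_of_lt hib] at h1
      rw [Nat.mul_add_mod, Nat.mod_eq_of_lt hxk, add_comm (i % b), Nat.mul_add_mod,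
        Nat.mod_eq_of_lt hib] at h2
      exact ⟨by simpa using h1, h2⟩

theorem mem_W_sEnum_prefixVal (hb : 0 < b) (x : ℕ → Fin b) (k : ℕ) :
    x ∈ W b (sEnum b k hb (prefixVal b x k)) := by
  rw [mem_W_sEnum_iff, Nat.mod_eq_of_lt (prefixVal_lt x k)]

theorem prefixVal_mono (h : toLex x ≤ toLex y) (k : ℕ) : prefixVal b x k ≤ prefixVal b y k := by
  induction k with
  | zero => rfl
  | succ k ih =>
    have hb := (x 0).pos
    simp only [prefixVal]
    rcases ih.lt_or_eq with hlt | heq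
    · have := (x k).isLt
      nlinarith
    · have hy : y ∈ W b (sEnum b k hb (prefixVal b x k)) := by
        rw [mem_W_sEnum_iff, heq, Nat.mod_eq_of_lt (prefixVal_lt y k)]
      rw [W_eq_cylinder (mem_W_sEnum_prefixVal hb x k), length_sEnum] at hy
      have := Pi.apply_le_of_toLex h fun j hj => (hy j hj).symm
      rw [heq]
      omega

theorem toLex_lt_of_mem_W_sEnum (hb : 0 < b) {k i j : ℕ} (hij : i < j) (hj : j < b ^ k)
    (hx : x ∈ W b (sEnum b k hb i)) (hy : y ∈ W b (sEnum b k hb j)) : toLex x < toLex y := by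
  refine lt_of_not_ge fun hyx => ?_
  have := prefixVal_mono hyx k
  rw [mem_W_sEnum_iff] at hx hy
  rw [hx, hy, Nat.mod_eq_of_lt hj, Nat.mod_eq_of_lt (hij.trans hj)] at this
  omega

theorem eq_of_mem_W_sEnum (hb : 0 < b) {k i j : ℕ} (hi : i < b ^ k) (hj : j < b ^ k)
    (hxi : x ∈ W b (sEnum b k hb i)) (hxj : x ∈ W b (sEnum b k hb j)) : i = j := by
  rw [mem_W_sEnum_iff] at hxi hxj
  rwa [hxi, Nat.mod_eq_of_lt hi, Nat.mod_eq_of_lt hj] at hxj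

end Digits

section Pieces

variable {α : Type*} [LinearOrder α] {l : ℕ} (c : Fin l → ℕ → α)

/-- The `i ≤ l` with `c (i - 1) < z ≤ c i` lexicographically, where `c (-1) = -∞` and `c l = +∞`
(for increasing `c`). -/
noncomputable def pieceIndex (z : ℕ → α) : ℕ :=
  Nat.find (⟨l, fun h => absurd h (lt_irrefl l)⟩ :
    ∃ i, ∀ hi : i < l, toLex z ≤ toLex (c ⟨i, hi⟩))

theorem pieceIndex_le (z : ℕ → α) : pieceIndex c z ≤ l :=
  Nat.find_min' _ fun h => absurd h (lt_irrefl l)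

theorem pieceIndex_mono {x y : ℕ → α} (h : toLex x ≤ toLex y) : pieceIndex c x ≤ pieceIndex c y :=
  Nat.find_mono fun _ hi hil => h.trans (hi hil)

theorem pieceIndex_eq_iff {z : ℕ → α} {i : ℕ} (hi : i ≤ l) :
    pieceIndex c z = i ↔ (∀ h : i < l, toLex z ≤ toLex (c ⟨i, h⟩)) ∧
      ∀ j : Fin l, (j : ℕ) < i → toLex (c j) < toLex z := by
  rw [pieceIndex, Nat.find_eq_iff]
  refine and_congr Iff.rfl ⟨fun h j hj => ?_, fun h j hj hle => ?_⟩
  · exact lt_of_not_ge fun hle => h j hj fun _ => hle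
  · exact (h ⟨j, hj.trans_le hi⟩ hj).not_ge (hle _)

theorem pieceIndex_eq_iff_of_lt {z : ℕ → α} (i : Fin l) :
    pieceIndex c z = i ↔ toLex z ≤ toLex (c i) ∧ ∀ j < i, toLex (c j) < toLex z := by
  simp [pieceIndex_eq_iff c i.isLt.le, i.isLt]

theorem eventually_pieceIndex_eq [OrderTop α] [TopologicalSpace α] [DiscreteTopology α]
    (hc : ∀ i, ∀ᶠ m in atTop, c i m = ⊤) (z : ℕ → α) :
    ∀ᶠ y in 𝓝 z, pieceIndex c y = pieceIndex c z := by
  obtain ⟨hle, hlt⟩ := (pieceIndex_eq_iff c (pieceIndex_le c z)).1 rfl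
  have hle' : ∀ᶠ y in 𝓝 z, ∀ h : pieceIndex c z < l, toLex y ≤ toLex (c ⟨_, h⟩) := by
    by_cases h : pieceIndex c z < l
    · filter_upwards [(isOpen_setOf_toLex_le (hc _)).mem_nhds (hle h)] with y hy _ using hy
    · exact Eventually.of_forall fun _ h' => absurd h' h
  have hlt' : ∀ᶠ y in 𝓝 z, ∀ j : Fin l, (j : ℕ) < pieceIndex c z → toLex (c j) < toLex y :=
    eventually_all.2 fun j => by
      by_cases hj : (j : ℕ) < pieceIndex c z
      · filter_upwards [(isOpen_setOf_toLex_lt (c j)).mem_nhds (hlt j hj)] with y hy _ using hy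
      · exact Eventually.of_forall fun _ h' => absurd h' hj
  filter_upwards [hle', hlt'] with y hy1 hy2
  exact (pieceIndex_eq_iff c (pieceIndex_le c z)).2 ⟨hy1, hy2⟩

end Pieces

section Gluing

variable {b k : ℕ}

theorem top_not_mem_W_sEnum {i : ℕ} (hi : i < (b + 1) ^ k - 1) :
    ⊤ ∉ W (b + 1) (sEnum (b + 1) k b.succ_pos i) := fun htop => by
  obtain ⟨t, ht⟩ := W_nonempty b.succ_pos (sEnum (b + 1) k b.succ_pos ((b + 1) ^ k - 1))
  exact (toLex_lt_of_mem_W_sEnum b.succ_pos hi (Nat.sub_lt (pow_pos b.succ_pos k)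
    one_pos) htop ht).not_ge le_top

theorem exists_cSur_mem_W_sEnum_iff_pieceIndex_eq (c : Fin ((b + 1) ^ k - 1) → ℕ → Fin (b + 1))
    (hc : StrictMono fun i => toLex (c i)) (hc_ne : ∀ i, c i ≠ ⊤)
    (hc_top : ∀ i, ∀ᶠ m in atTop, c i m = ⊤) :
    ∃ g, CSur (b + 1) g ∧ ∀ i < (b + 1) ^ k, ∀ z,
      g z ∈ W (b + 1) (sEnum (b + 1) k b.succ_pos i) ↔ pieceIndex c z = i := by
  set p : ℕ → ℕ → Fin (b + 1) := fun i => if hi : i < (b + 1) ^ k - 1 then c ⟨i, hi⟩ else ⊤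
  have hp : ∀ i ≤ (b + 1) ^ k - 1, pieceIndex c (p i) = i := by
    intro i hi
    refine (pieceIndex_eq_iff c hi).2 ⟨fun h => by simp [p, h], fun j hj => ?_⟩
    by_cases h : i < (b + 1) ^ k - 1
    · rw [show p i = c ⟨i, h⟩ from dif_pos h]
      exact hc (show j < ⟨i, h⟩ from hj)
    · rw [show p i = ⊤ from dif_neg h]
      exact lt_top_iff_ne_top.2 fun H => hc_ne j (toLex_inj.1 H)
  choose n hn using fun i => exists_cylinder_subset (eventually_pieceIndex_eq c hc_top (p i))
  choose t ht using fun i => W_nonempty b.succ_pos (sEnum (b + 1) k b.succ_pos i)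
  have hW : ∀ i, W (b + 1) (sEnum (b + 1) k b.succ_pos i) = cylinder (t i) k := fun i => by
    rw [W_eq_cylinder (ht i), length_sEnum]
  set G : ℕ → (ℕ → Fin (b + 1)) → ℕ → Fin (b + 1) := fun i => splice (t i) k ∘ blowUp (p i) (n i)
  have hG : ∀ z, G (pieceIndex c z) z ∈ W (b + 1) (sEnum (b + 1) k b.succ_pos (pieceIndex c z)) :=
    fun z => (hW _).symm ▸ splice_mem_cylinder _ _ _
  have hI : ∀ z, pieceIndex c z < (b + 1) ^ k := fun z =>
    (pieceIndex_le c z).trans_lt (Nat.sub_lt (pow_pos b.succ_pos k) one_pos)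
  refine ⟨fun z => G (pieceIndex c z) z, ⟨?_, fun y => ?_, fun x y hxy => ?_⟩,
    fun i hi z => ⟨fun h => eq_of_mem_W_sEnum b.succ_pos (hI z) hi (hG z) h, fun h => h ▸ hG z⟩⟩
  · refine continuous_iff_continuousAt.2 fun z => ?_
    have hGz : Continuous (G (pieceIndex c z)) :=
      (continuous_splice _ _).comp (continuous_blowUp _ _)
    refine hGz.continuousAt.congr ?_
    filter_upwards [eventually_pieceIndex_eq c hc_top z] with y hy
    rw [hy]
  · set i := prefixVal (b + 1) y k
    have hy : y ∈ cylinder (t i) k := hW i ▸ mem_W_sEnum_prefixVal b.succ_pos y k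
    have hzi : pieceIndex c (splice (p i) (n i) fun m => y (m + k)) = i :=
      (hn i (splice_mem_cylinder _ _ _)).trans (hp i (by have := prefixVal_lt y k; omega))
    refine ⟨splice (p i) (n i) fun m => y (m + k), ?_⟩
    simp only [hzi, G, Function.comp_apply, blowUp_splice, splice_shift hy]
  · rw [lexLE_iff] at hxy ⊢
    rcases (pieceIndex_mono c hxy).lt_or_eq with hlt | heq
    · exact (toLex_lt_of_mem_W_sEnum b.succ_pos hlt (hI y) (hG x) (hG y)).le
    · simp only [heq]
      exact toLex_splice_le_splice (blowUp_mono _ _ hxy)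

end Gluing

section Yset

variable {b k : ℕ} {h : (ℕ → Fin (b + 1)) → ℕ → Fin (b + 1)} {s : List (Fin (b + 1))}
  {x : ℕ → Fin (b + 1)}

theorem toLex_le_of_toLex_apply_le (hh : CSur (b + 1) h)
    (hx : IsGreatestLex (b + 1) (h ⁻¹' W (b + 1) s) x) {z : ℕ → Fin (b + 1)}
    (hz : toLex (h z) ≤ toLex (h x)) : toLex z ≤ toLex x := by
  rw [isGreatestLex_iff] at hx
  refine le_of_not_gt fun hxz => (hx.2 z ?_).not_gt hxz
  have : h z = h x := toLex_inj.1 (hz.antisymm (hh.toLex_le hxz.le))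
  simpa [Set.mem_preimage, this] using hx.1

theorem eventually_apply_eq_top (hh : CSur (b + 1) h)
    (hx : IsGreatestLex (b + 1) (h ⁻¹' W (b + 1) s) x) : ∀ᶠ m in atTop, h x m = ⊤ := by
  rw [isGreatestLex_iff] at hx
  set y := splice (h x) s.length ⊤
  have hy : y ∈ W (b + 1) s := W_eq_cylinder hx.1 ▸ splice_mem_cylinder _ _ _
  obtain ⟨x', hx'⟩ := hh.2.1 y
  have hle : toLex (h x) ≤ toLex y := by
    refine Pi.toLex_monotone ?_
    rw [← splice_shift (self_mem_cylinder (h x) s.length)]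
    exact splice_le_splice le_top
  have hx'W : x' ∈ h ⁻¹' W (b + 1) s := by
    rw [Set.mem_preimage, hx']
    exact hy
  have heq : h x = y := toLex_inj.1 (hle.antisymm (hx' ▸ hh.toLex_le (hx.2 x' hx'W)))
  filter_upwards [eventually_ge_atTop s.length] with m hm
  rw [heq, ← Nat.sub_add_cancel hm]
  exact splice_add _ _ _ _

theorem apply_ne_top (hh : CSur (b + 1) h) (hx : IsGreatestLex (b + 1) (h ⁻¹' W (b + 1) s) x)
    (hx_top : x ≠ ⊤) : h x ≠ ⊤ := fun htop =>
  hx_top <| toLex_inj.1 <| le_top.antisymm <|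
    toLex_le_of_toLex_apply_le hh hx (by rw [htop]; exact le_top)

theorem exists_isGreatestLex_of_isGreatestLex_comp {f : (ℕ → Fin b) → ℕ → Fin b}
    {h : (ℕ → Fin b) → ℕ → Fin b} {x : ℕ → Fin b} (hf : Continuous f) {U : Set (ℕ → Fin b)}
    (hU : IsOpen U) (hx : IsGreatestLex b ((f ∘ h) ⁻¹' U) x) :
    ∃ s, IsGreatestLex b (h ⁻¹' W b s) x := by
  obtain ⟨N, hN⟩ := exists_cylinder_subset ((hU.preimage hf).mem_nhds hx.1)
  refine ⟨List.ofFn fun j : Fin N => h x j, ?_⟩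
  rw [W_ofFn]
  exact ⟨self_mem_cylinder _ _, fun y hy => hx.2 y (hN hy)⟩

theorem ne_top_of_isGreatestLex {F : (ℕ → Fin (b + 1)) → ℕ → Fin (b + 1)} (hF : CSur (b + 1) F)
    {U : Set (ℕ → Fin (b + 1))} (hU : ⊤ ∉ U) (hx : IsGreatestLex (b + 1) (F ⁻¹' U) x) :
    x ≠ ⊤ := by
  rintro rfl
  obtain ⟨z, hz⟩ := hF.2.1 ⊤
  have hle := hF.toLex_le (show toLex z ≤ toLex ⊤ from le_top)
  rw [hz] at hle
  have : F ⊤ = ⊤ := toLex_inj.1 (le_top.antisymm hle)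
  exact hU (this ▸ hx.1)

theorem mem_Yset_of_isGreatestLex_comp (hh : CSur (b + 1) h)
    {f : (ℕ → Fin (b + 1)) → ℕ → Fin (b + 1)} (hf : CSur (b + 1) f)
    {v : Fin ((b + 1) ^ k - 1) → ℕ → Fin (b + 1)}
    (hv : ∀ i : Fin ((b + 1) ^ k - 1), IsGreatestLex (b + 1)
      ((f ∘ h) ⁻¹' W (b + 1) (sEnum (b + 1) k b.succ_pos (i : ℕ))) (v i)) :
    (∀ i, v i ∈ Yset (b + 1) h) ∧ ∀ i j, i < j → lexLT (b + 1) (v i) (v j) := by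
  refine ⟨fun i => ⟨exists_isGreatestLex_of_isGreatestLex_comp hf.1 (isOpen_W _) (hv i), ?_⟩,
    fun i j hij => lexLT_iff.2 (lt_of_not_ge fun hji => ?_)⟩
  · rw [forall_le_apply_iff_eq_top]
    exact ne_top_of_isGreatestLex (hf.comp hh) (top_not_mem_W_sEnum i.isLt) (hv i)
  · exact ((hf.comp hh).toLex_le hji).not_gt (toLex_lt_of_mem_W_sEnum b.succ_pos hij
      (by have := j.isLt; omega) (hv i).1 (hv j).1)

theorem exists_cSur_isGreatestLex_of_mem_Yset (hh : CSur (b + 1) h)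
    {v : Fin ((b + 1) ^ k - 1) → ℕ → Fin (b + 1)} (hY : ∀ i, v i ∈ Yset (b + 1) h)
    (hv : ∀ i j, i < j → lexLT (b + 1) (v i) (v j)) :
    ∃ f, CSur (b + 1) f ∧
      ∀ i : Fin ((b + 1) ^ k - 1), IsGreatestLex (b + 1)
        ((f ∘ h) ⁻¹' W (b + 1) (sEnum (b + 1) k b.succ_pos (i : ℕ))) (v i) := by
  choose s hs using fun i => (hY i).1
  have hle : ∀ i z, toLex (h z) ≤ toLex (h (v i)) → toLex z ≤ toLex (v i) :=
    fun i _ => toLex_le_of_toLex_apply_le hh (hs i)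
  have hc : StrictMono fun i => toLex (h (v i)) :=
    fun i j hij => lt_of_not_ge fun hji => (lexLT_iff.1 (hv i j hij)).not_ge (hle i _ hji)
  have hne : ∀ i, h (v i) ≠ ⊤ :=
    fun i => apply_ne_top hh (hs i) (forall_le_apply_iff_eq_top.not.1 (hY i).2)
  obtain ⟨g, hg, hgW⟩ := exists_cSur_mem_W_sEnum_iff_pieceIndex_eq _ hc hne
    fun i => eventually_apply_eq_top hh (hs i)
  have hi : ∀ i : Fin ((b + 1) ^ k - 1), (i : ℕ) < (b + 1) ^ k := fun i => by omega
  refine ⟨g, hg, fun i => isGreatestLex_iff.2 ⟨?_, fun z hz => ?_⟩⟩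
  · exact (hgW i (hi i) _).2 ((pieceIndex_eq_iff_of_lt _ i).2 ⟨le_rfl, fun j hj => hc hj⟩)
  · exact hle i z ((pieceIndex_eq_iff_of_lt _ i).1 ((hgW i (hi i) _).1 hz)).1

end Yset

/-- the strictly increasing `(b^k - 1)`-tuples from `Y_h` are exactly the
tuples `(max (f∘h)⁻¹(W_{s^k_i}))_{i < b^k - 1}` as `f` ranges over `C↑_sur(b^ω)`. -/
theorem finding_function_relative (b : ℕ) (hb : 2 ≤ b) (k : ℕ)
    (h : (ℕ → Fin b) → (ℕ → Fin b)) (hh : CSur b h) :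
    {v : Fin (b ^ k - 1) → (ℕ → Fin b) |
        (∀ i, v i ∈ Yset b h) ∧ ∀ i j, i < j → lexLT b (v i) (v j)} =
      {v | ∃ f, CSur b f ∧ ∀ i : Fin (b ^ k - 1),
        IsGreatestLex b ((f ∘ h) ⁻¹' W b (sEnum b k (by omega) (i : ℕ))) (v i)} := by
  obtain ⟨b, rfl⟩ : ∃ n, b = n + 1 := ⟨b - 1, by omega⟩
  ext v
  exact ⟨fun ⟨hY, hv⟩ => exists_cSur_isGreatestLex_of_mem_Yset hh hY hv,
    fun ⟨_, hf, hv⟩ => mem_Yset_of_isGreatestLex_comp hh hf hv⟩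
end

section
/- For every x ∈ b^ω and every filtering (U_s)_{s ∈ b^{<ω}} on b^ω, there exists a unique branch y ∈ b^ω such that x ∈ U_{y|n} for every n < ω, and the map sending x to this branch y is a continuous nondecreasing surjection of b^ω. -/
/-!
For each `n` the sets `U s` with `s` of length `n` partition `b^ω` (induction on `n`: the
children of `U s` partition it), so every `x` follows exactly one branch. The `n`-th digit of
the branch is constant on the clopen set `U (y|n+1)` containing `x`, which gives continuity;
a point over a prescribed branch `y` exists by compactness, since the `U (y|n)` are decreasing
nonempty closed sets. For monotonicity, the children of `U s` are intervals ordered like their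
indices: if `y ∈ U (s ++ [j])` lay below `x ∈ U (s ++ [i])` with `i < j`, the maximum of
`U (s ++ [i])` would lie between `y` and the maximum of `U (s ++ [j])`, hence in `U (s ++ [j])`.
These maxima exist because the sets `{x | a ≤ₗₑₓ x}` are closed in the product topology.
-/

section LexOrder

variable {α : Type*} {b : ℕ}

theorem lexLT_iff_toLex_lt {x y : ℕ → Fin b} : lexLT b x y ↔ toLex x < toLex y := Iff.rfl

theorem lexLE_iff_toLex_le {x y : ℕ → Fin b} : lexLE b x y ↔ toLex x ≤ toLex y := by
  rw [le_iff_eq_or_lt, toLex_inj]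
  rfl

instance [TopologicalSpace α] : TopologicalSpace (Lex (ℕ → α)) :=
  .induced ofLex Pi.topologicalSpace

theorem continuous_toLex [TopologicalSpace α] : Continuous (toLex : (ℕ → α) → Lex (ℕ → α)) :=
  continuous_induced_rng.2 continuous_id

theorem isOpen_setOf_toLex_lt [LinearOrder α] [TopologicalSpace α] [DiscreteTopology α]
    (a : Lex (ℕ → α)) :
    IsOpen {x : ℕ → α | toLex x < a} := by
  have hcoord : ∀ n (t : Set α), IsOpen {x : ℕ → α | x n ∈ t} := fun n t =>
    (isOpen_discrete t).preimage (continuous_apply n)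
  have hset : {x : ℕ → α | toLex x < a} =
      ⋃ n, (⋂ m ∈ Set.Iio n, {x | x m ∈ ({ofLex a m} : Set α)}) ∩
        {x | x n ∈ Set.Iio (ofLex a n)} := by
    ext x
    simp only [Set.mem_ofPred_eq, Set.mem_iUnion, Set.mem_inter_iff, Set.mem_iInter, Set.mem_Iio,
      Set.mem_singleton_iff]
    rfl
  rw [hset]
  exact isOpen_iUnion fun n =>
    ((Set.finite_Iio n).isOpen_biInter fun m _ => hcoord m _).inter (hcoord n _)

instance [LinearOrder α] [TopologicalSpace α] [DiscreteTopology α] :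
    ClosedIciTopology (Lex (ℕ → α)) where
  isClosed_Ici a := by
    rw [isClosed_induced_iff]
    refine ⟨{x | ¬ toLex x < a}, (isOpen_setOf_toLex_lt a).isClosed_compl, ?_⟩
    ext x
    exact not_lt

theorem IsClosed.exists_isGreatestLex {S : Set (ℕ → Fin b)} (hS : IsClosed S)
    (hne : S.Nonempty) : ∃ m, IsGreatestLex b S m := by
  obtain ⟨m, hm, hmax⟩ := hS.isCompact.exists_isMaxOn hne continuous_toLex.continuousOn
  exact ⟨m, hm, fun y hy => lexLE_iff_toLex_le.2 (hmax hy)⟩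

end LexOrder

theorem List.ofFn_succ_eq_append {α : Type*} (y : ℕ → α) (n : ℕ) :
    (List.ofFn fun i : Fin (n + 1) => y i) = (List.ofFn fun i : Fin n => y i) ++ [y n] := by
  rw [List.ofFn_succ', List.concat_eq_append]
  rfl

theorem exists_forall_ofFn_of_forall_exists_append {α : Type*} {P : List α → Prop}
    (h0 : P []) (hstep : ∀ s, P s → ∃ a, P (s ++ [a])) :
    ∃ y : ℕ → α, ∀ n, P (List.ofFn fun i : Fin n => y i) := by
  have : Nonempty α := ⟨(hstep [] h0).choose⟩
  choose! next hnext using hstep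
  let extend (s : List α) : List α := s ++ [next s]
  have hP : ∀ n, P (extend^[n] []) := by
    intro n
    induction n with
    | zero => exact h0
    | succ n ih => rw [Function.iterate_succ_apply']; exact hnext _ ih
  have hofFn : ∀ n, extend^[n] [] = List.ofFn fun i : Fin n => next (extend^[i] []) := by
    intro n
    induction n with
    | zero => rfl
    | succ n ih =>
      rw [Function.iterate_succ_apply']
      exact (congrArg (· ++ [next (extend^[n] [])]) ih).trans
        (List.ofFn_succ_eq_append (fun k => next (extend^[k] [])) n).symm
  exact ⟨fun n => next (extend^[n] []), fun n => hofFn n ▸ hP n⟩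

def IsBranch {b : ℕ} (U : List (Fin b) → Set (ℕ → Fin b)) (x y : ℕ → Fin b) : Prop :=
  ∀ n, x ∈ U (List.ofFn fun i : Fin n => y i)

namespace Filtering

variable {b : ℕ} {U : List (Fin b) → Set (ℕ → Fin b)}

theorem nonempty (hU : Filtering b U) (s : List (Fin b)) : (U s).Nonempty := (hU.1 s).1

theorem isClopen (hU : Filtering b U) (s : List (Fin b)) : IsClopen (U s) := (hU.1 s).2.1

theorem lexInterval (hU : Filtering b U) (s : List (Fin b)) : LexInterval b (U s) :=
  (hU.1 s).2.2

theorem root_eq_univ (hU : Filtering b U) : U [] = Set.univ := hU.2.1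

theorem eq_iUnion_append (hU : Filtering b U) (s : List (Fin b)) :
    U s = ⋃ i : Fin b, U (s ++ [i]) :=
  hU.2.2.1 s

theorem disjoint_append (hU : Filtering b U) (s : List (Fin b)) {i j : Fin b} (hij : i ≠ j) :
    Disjoint (U (s ++ [i])) (U (s ++ [j])) :=
  hU.2.2.2.1 s i j hij

theorem lexLT_of_isGreatestLex (hU : Filtering b U) (s : List (Fin b)) {i j : Fin b}
    (hij : i < j) {x y : ℕ → Fin b} (hx : IsGreatestLex b (U (s ++ [i])) x)
    (hy : IsGreatestLex b (U (s ++ [j])) y) : lexLT b x y :=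
  hU.2.2.2.2 s i j hij x y hx hy

theorem append_subset (hU : Filtering b U) (s : List (Fin b)) (i : Fin b) :
    U (s ++ [i]) ⊆ U s := by
  rw [hU.eq_iUnion_append s]
  exact Set.subset_iUnion (fun i => U (s ++ [i])) i

theorem eq_of_mem_ofFn (hU : Filtering b U) {x : ℕ → Fin b} :
    ∀ {n : ℕ} {g h : Fin n → Fin b}, x ∈ U (List.ofFn g) → x ∈ U (List.ofFn h) → g = h
  | 0, g, h, _, _ => Subsingleton.elim g h
  | n + 1, g, h, hg, hh => by
    rw [List.ofFn_succ', List.concat_eq_append] at hg hh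
    have hinit : (fun i : Fin n => g i.castSucc) = fun i => h i.castSucc :=
      hU.eq_of_mem_ofFn (hU.append_subset _ _ hg) (hU.append_subset _ _ hh)
    have hlast : g (Fin.last n) = h (Fin.last n) := by
      by_contra hne
      rw [hinit] at hg
      exact Set.disjoint_left.1 (hU.disjoint_append _ hne) hg hh
    rw [← List.ofFn_inj, List.ofFn_succ', List.ofFn_succ', hinit, hlast]

theorem exists_isBranch (hU : Filtering b U) (x : ℕ → Fin b) : ∃ y, IsBranch U x y :=
  exists_forall_ofFn_of_forall_exists_append (P := (x ∈ U ·)) (hU.root_eq_univ ▸ trivial)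
    fun s hs => Set.mem_iUnion.1 (hU.eq_iUnion_append s ▸ hs)

theorem isBranch_unique (hU : Filtering b U) {x y z : ℕ → Fin b} (hy : IsBranch U x y)
    (hz : IsBranch U x z) : y = z :=
  funext fun m => congrFun (hU.eq_of_mem_ofFn (hy (m + 1)) (hz (m + 1))) (Fin.last m)

variable {F : (ℕ → Fin b) → (ℕ → Fin b)}

theorem continuous_of_isBranch (hU : Filtering b U) (hF : ∀ x, IsBranch U x (F x)) :
    Continuous F := by
  refine continuous_pi fun n => IsLocallyConstant.continuous ?_
  rw [IsLocallyConstant.iff_eventually_eq]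
  intro x
  filter_upwards [(hU.isClopen _).isOpen.mem_nhds (hF x (n + 1))] with x' hx'
  exact congrFun (hU.eq_of_mem_ofFn (hF x' (n + 1)) hx') (Fin.last n)

theorem surjective_of_isBranch (hU : Filtering b U) (hF : ∀ x, IsBranch U x (F x)) :
    Function.Surjective F := by
  intro y
  obtain ⟨x, hx⟩ := IsCompact.nonempty_iInter_of_sequence_nonempty_isCompact_isClosed
    (fun n => U (List.ofFn fun i : Fin n => y i))
    (fun n => List.ofFn_succ_eq_append y n ▸ hU.append_subset _ _) (fun _ => hU.nonempty _)
    (hU.isClopen _).isClosed.isCompact (fun _ => (hU.isClopen _).isClosed)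
  exact ⟨x, hU.isBranch_unique (hF x) (Set.mem_iInter.1 hx)⟩

theorem lexLT_of_mem_append_of_lt (hU : Filtering b U) {s : List (Fin b)} {i j : Fin b}
    (hij : i < j) {x y : ℕ → Fin b} (hx : x ∈ U (s ++ [i])) (hy : y ∈ U (s ++ [j])) :
    lexLT b x y := by
  refine lexLT_iff_toLex_lt.2 (lt_of_not_ge fun hyx => ?_)
  obtain ⟨Mi, hMi⟩ := (hU.isClopen (s ++ [i])).isClosed.exists_isGreatestLex ⟨x, hx⟩
  obtain ⟨Mj, hMj⟩ := (hU.isClopen (s ++ [j])).isClosed.exists_isGreatestLex ⟨y, hy⟩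
  have hyMi : lexLE b y Mi :=
    lexLE_iff_toLex_le.2 (hyx.trans (lexLE_iff_toLex_le.1 (hMi.2 x hx)))
  have hMi_mem : Mi ∈ U (s ++ [j]) :=
    hU.lexInterval _ y hy Mj hMj.1 Mi hyMi (Or.inr (hU.lexLT_of_isGreatestLex s hij hMi hMj))
  exact Set.disjoint_left.1 (hU.disjoint_append s hij.ne) hMi.1 hMi_mem

theorem monotone_of_isBranch (hU : Filtering b U) (hF : ∀ x, IsBranch U x (F x)) :
    ∀ x y, lexLE b x y → lexLE b (F x) (F y) := by
  intro x y hxy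
  rw [lexLE_iff_toLex_le] at hxy ⊢
  refine le_of_not_gt fun hlt => hxy.not_gt ?_
  obtain ⟨n, hpre, hn⟩ : lexLT b (F y) (F x) := hlt
  have hx := hF x (n + 1)
  have hy := hF y (n + 1)
  rw [List.ofFn_succ_eq_append] at hx hy
  rw [List.ofFn_inj.2 (funext fun i : Fin n => hpre i i.isLt)] at hy
  exact lexLT_iff_toLex_lt.1 (hU.lexLT_of_mem_append_of_lt hn hy hx)

end Filtering

theorem filtering_branch_map_general (b : ℕ)
    (U : List (Fin b) → Set (ℕ → Fin b)) (hU : Filtering b U) :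
    (∀ x : ℕ → Fin b, ∃! y : ℕ → Fin b,
        ∀ n : ℕ, x ∈ U (List.ofFn fun i : Fin n => y i)) ∧
    (∃ F : (ℕ → Fin b) → (ℕ → Fin b),
        (∀ x n, x ∈ U (List.ofFn fun i : Fin n => F x i)) ∧ CSur b F) := by
  refine ⟨fun x => existsUnique_of_exists_of_unique (hU.exists_isBranch x)
    fun _ _ => hU.isBranch_unique, ?_⟩
  choose F hF using hU.exists_isBranch
  exact ⟨F, hF, hU.continuous_of_isBranch hF, hU.surjective_of_isBranch hF,
    hU.monotone_of_isBranch hF⟩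

/-- every filtering determines a unique branch map, which is a continuous
nondecreasing surjection of `b^ω`. -/
theorem filtering_branch_map (b : ℕ) (hb : 2 ≤ b)
    (U : List (Fin b) → Set (ℕ → Fin b)) (hU : Filtering b U) :
    (∀ x : ℕ → Fin b, ∃! y : ℕ → Fin b,
        ∀ n : ℕ, x ∈ U (List.ofFn fun i : Fin n => y i)) ∧
    (∃ F : (ℕ → Fin b) → (ℕ → Fin b),
        (∀ x n, x ∈ U (List.ofFn fun i : Fin n => F x i)) ∧ CSur b F) :=
  filtering_branch_map_general b U hU
end
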